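/- Let C be a complete and cocomplete category equipped with a factorization system (E,M), let A be an alphabet, and let L : O_A → C be a C-language. Then the category Auto(L) has an initial object (given by the left Kan extension of L along ι) and a final object (given by the right Kan extension of L along ι), and the componentwise (E,M)-factorization of the unique morphism from the initial to the final object of Auto(L) yields an automaton Min(L) accepting L which (E_Aut, M_Aut)-divides every automaton accepting L: for every 𝒜 in Auto(L) there exist 𝒵 in Auto(L), a morphism 𝒵 → 𝒜 in Auto(L) all of whose components lie in M, and a morphism 𝒵 → Min(L) all of whose components lie in E. -/

import Mathlib

open CategoryTheory CategoryTheory.Limits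

universe v u

/-! ### The input category `I_A` of word automata -/

inductive WObj (A : Type) : Type where
  | left | center | right

inductive WEdge {A : Type} : WObj A → WObj A → Type where
  | tri : WEdge WObj.left WObj.center
  | letter (a : A) : WEdge WObj.center WObj.center
  | tril : WEdge WObj.center WObj.right

instance (A : Type) : Quiver (WObj A) := ⟨WEdge⟩

/-- `I_A`: the free category on the graph `left -▷→ center -a→ center -◁→ right`. -/
def IA (A : Type) : Type := Paths (WObj A)

instance (A : Type) : Category (IA A) :=
  inferInstanceAs (Category (Paths (WObj A)))

def IA.l (A : Type) : IA A := WObj.left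
def IA.c (A : Type) : IA A := WObj.center
def IA.r (A : Type) : IA A := WObj.right

/-- The generating morphism `▷ : left ⟶ center`. -/
def IA.tri (A : Type) : IA.l A ⟶ IA.c A := Quiver.Hom.toPath WEdge.tri
/-- The generating morphism `a : center ⟶ center` for a letter `a`. -/
def IA.letter {A : Type} (a : A) : IA.c A ⟶ IA.c A := Quiver.Hom.toPath (WEdge.letter a)
/-- The generating morphism `◁ : center ⟶ right`. -/
def IA.tril (A : Type) : IA.c A ⟶ IA.r A := Quiver.Hom.toPath WEdge.tril

/-- The word spelled by a path in the graph (the sequence of `letter` edges used). -/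
def toWord {A : Type} : ∀ {X Y : WObj A}, Quiver.Path X Y → List A
  | _, _, Quiver.Path.nil => []
  | _, _, Quiver.Path.cons p e =>
      toWord p ++ (match e with
        | WEdge.letter a => [a]
        | _ => [])

/-- The path `center → center` spelling a word `w`. -/
def pathCC {A : Type} : List A → ((IA.c A) ⟶ (IA.c A))
  | [] => Quiver.Path.nil
  | a :: w => (Quiver.Hom.toPath (WEdge.letter a)).comp (pathCC w)

/-- The path `▷ w ◁ : left ⟶ right` spelling a word `w`. -/
def pathLR {A : Type} (w : List A) : (IA.l A) ⟶ (IA.r A) :=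
  IA.tri A ≫ pathCC w ≫ IA.tril A

theorem path_from_right {A : Type} : ∀ {Z : WObj A},
    Quiver.Path (WObj.right : WObj A) Z → Z = WObj.right
  | _, Quiver.Path.nil => rfl
  | _, Quiver.Path.cons p e => by
      have h := path_from_right p
      subst h
      exact nomatch e

theorem path_ll_nil {A : Type} (p : Quiver.Path (WObj.left : WObj A) WObj.left) :
    p = Quiver.Path.nil := by
  cases p with
  | nil => rfl
  | cons q e => exact nomatch e

theorem path_rr_nil {A : Type} (p : Quiver.Path (WObj.right : WObj A) WObj.right) :
    p = Quiver.Path.nil := by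
  cases p with
  | nil => rfl
  | cons q e =>
      have h := path_from_right q
      subst h
      exact nomatch e

theorem path_rl_false {A : Type} (p : Quiver.Path (WObj.right : WObj A) WObj.left) :
    False := by
  have := path_from_right p
  exact nomatch this

/-- `O_A`: the full subcategory of `I_A` on the objects `left` and `right`. -/
def OA (A : Type) : Type := ObjectProperty.FullSubcategory (fun X : IA A => X ≠ IA.c A)

instance (A : Type) : Category (OA A) :=
  inferInstanceAs (Category (ObjectProperty.FullSubcategory (fun X : IA A => X ≠ IA.c A)))

/-- The inclusion functor `ι : O_A ⥤ I_A`. -/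
def OA.inc (A : Type) : OA A ⥤ IA A := ObjectProperty.ι _

def OA.l (A : Type) : OA A := ⟨IA.l A, fun h => by cases h⟩
def OA.r (A : Type) : OA A := ⟨IA.r A, fun h => by cases h⟩

/-- The morphism `▷ w ◁ : left ⟶ right` of `O_A`. -/
def OA.word {A : Type} (w : List A) : OA.l A ⟶ OA.r A := InducedCategory.homMk (pathLR w)

/-- The language `O_A ⥤ C` determined by two objects `LI`, `LO` of `C` and a function
assigning to every word `w ∈ A*` a morphism `LI ⟶ LO` (the value at `▷w◁`). -/
def mkLang {A : Type} {C : Type u} [Category.{v} C] (LI LO : C)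
    (f : List A → (LI ⟶ LO)) : OA A ⥤ C where
  obj X :=
    match X with
    | ⟨WObj.left, _⟩ => LI
    | ⟨WObj.right, _⟩ => LO
    | ⟨WObj.center, h⟩ => absurd rfl h
  map {X Y} p :=
    match X, Y, p with
    | ⟨WObj.left, _⟩, ⟨WObj.left, _⟩, _ => 𝟙 LI
    | ⟨WObj.left, _⟩, ⟨WObj.right, _⟩, p => f (toWord p.hom)
    | ⟨WObj.right, _⟩, ⟨WObj.right, _⟩, _ => 𝟙 LO
    | ⟨WObj.right, _⟩, ⟨WObj.left, _⟩, p => (path_rl_false p.hom).elim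
    | ⟨WObj.center, h⟩, _, _ => absurd rfl h
    | _, ⟨WObj.center, h⟩, _ => absurd rfl h
  map_id X := by
    rcases X with ⟨(_|_|_), hX⟩
    · rfl
    · exact absurd rfl hX
    · rfl
  map_comp {X Y Z} p q := by
    rcases X with ⟨(_|_|_), hX⟩ <;> rcases Y with ⟨(_|_|_), hY⟩ <;>
      rcases Z with ⟨(_|_|_), hZ⟩ <;> rcases p with ⟨p⟩ <;> rcases q with ⟨q⟩ <;>
      first
        | exact absurd rfl hX
        | exact absurd rfl hY
        | exact absurd rfl hZ
        | exact (path_rl_false p).elim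
        | exact (path_rl_false q).elim
        | exact (Category.id_comp _).symm
        | (have hp := path_ll_nil p
           subst hp
           show f (toWord (Quiver.Path.comp Quiver.Path.nil q)) = 𝟙 LI ≫ f (toWord q)
           exact (congrArg (fun r => f (toWord r))
               (Quiver.Path.nil_comp (q : Quiver.Path (WObj.left : WObj A) WObj.right))).trans
               (Category.id_comp _).symm)
        | (have hq := path_rr_nil q
           subst hq
           show f (toWord (Quiver.Path.comp p Quiver.Path.nil)) = f (toWord p) ≫ 𝟙 LO
           exact (Category.comp_id _).symm)

/-- A `C`-automaton `M` accepts the `C`-language `L` when `ι ⋙ M = L`. -/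
def Accepts {A : Type} {C : Type u} [Category.{v} C] (M : IA A ⥤ C) (L : OA A ⥤ C) : Prop :=
  OA.inc A ⋙ M = L

/-- The category `Auto(L)` of `C`-automata accepting the language `L`; morphisms are
natural transformations whose whiskering along `ι` is the identity of `L`. -/
def Auto (A : Type) {C : Type u} [Category.{v} C] (L : OA A ⥤ C) : Type _ :=
  { M : IA A ⥤ C // Accepts M L }

instance (A : Type) {C : Type u} [Category.{v} C] (L : OA A ⥤ C) :
    Category (Auto A L) where
  Hom M N := { α : M.1 ⟶ N.1 //
    CategoryTheory.Functor.whiskerLeft (OA.inc A) α = eqToHom (M.2.trans N.2.symm) }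
  id M := ⟨𝟙 M.1, by simp⟩
  comp {M N P} f g := ⟨f.1 ≫ g.1, by
    rw [CategoryTheory.Functor.whiskerLeft_comp, f.2, g.2, eqToHom_trans]⟩
  id_comp f := Subtype.ext (Category.id_comp _)
  comp_id f := Subtype.ext (Category.comp_id _)
  assoc f g h := Subtype.ext (Category.assoc _ _ _)

/-- The functor `St : Auto(L) ⥤ C` evaluating an automaton at the object `center`. -/
def St (A : Type) {C : Type u} [Category.{v} C] (L : OA A ⥤ C) : Auto A L ⥤ C where
  obj M := M.1.obj (IA.c A)
  map f := f.1.app (IA.c A)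
  map_id _ := rfl
  map_comp _ _ := rfl

/-- The underlying natural transformation of a morphism in `Auto(L)`. -/
def Auto.nat {A : Type} {C : Type u} [Category.{v} C] {L : OA A ⥤ C} {M N : Auto A L}
    (α : M ⟶ N) : M.1 ⟶ N.1 :=
  (show { β : M.1 ⟶ N.1 //
      CategoryTheory.Functor.whiskerLeft (OA.inc A) β = eqToHom (M.2.trans N.2.symm) } from α).1

/-- A factorization system `(E, M)` on a category `K`: both classes contain all isomorphisms
and are closed under composition, every morphism factors as an `E`-morphism followed by an
`M`-morphism (with a chosen middle object `mid f`), and unique diagonal fill-ins exist. -/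
structure FactorizationSystem (K : Type u) [Category.{v} K] where
  E : MorphismProperty K
  M : MorphismProperty K
  E_iso : ∀ {X Y : K} (f : X ⟶ Y), IsIso f → E f
  M_iso : ∀ {X Y : K} (f : X ⟶ Y), IsIso f → M f
  E_comp : ∀ {X Y Z : K} (f : X ⟶ Y) (g : Y ⟶ Z), E f → E g → E (f ≫ g)
  M_comp : ∀ {X Y Z : K} (f : X ⟶ Y) (g : Y ⟶ Z), M f → M g → M (f ≫ g)
  mid : ∀ {X Y : K}, (X ⟶ Y) → K
  e : ∀ {X Y : K} (f : X ⟶ Y), X ⟶ mid f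
  m : ∀ {X Y : K} (f : X ⟶ Y), mid f ⟶ Y
  e_mem : ∀ {X Y : K} (f : X ⟶ Y), E (e f)
  m_mem : ∀ {X Y : K} (f : X ⟶ Y), M (m f)
  fac : ∀ {X Y : K} (f : X ⟶ Y), e f ≫ m f = f
  diagonal : ∀ {X Y X' Y' : K} (u : X ⟶ Y) (v : X' ⟶ Y') (f : X ⟶ X') (g : Y ⟶ Y'),
    E u → M v → u ≫ g = f ≫ v → ∃! d : Y ⟶ X', u ≫ d = f ∧ d ≫ v = g


/-!
An automaton accepting `L` amounts to a state object `Q` with `i : L(left) ⟶ Q`, an action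
`δ_a : Q ⟶ Q` and `f : Q ⟶ L(right)` such that `i ≫ δ_w ≫ f = L(▷w◁)` for every word `w`.
The coproduct `∐_w L(left)`, with `i` the inclusion at the empty word and `δ_a` sending the
summand of `w` to that of `wa`, is the free `A`-action on `L(left)`; dually `∏_w L(right)` is the
cofree one. This makes them initial and final in `Auto(L)`, and since a (left or right) extension
of `L` along `ι` carries exactly the relevant half of these data, also the Kan extensions.

Factoring the state map of any `τ : M ⟶ N` as `e ≫ m` gives an image automaton, the letters acting
on the middle object by the unique diagonal fill-ins. Taking for `Z` the image of `II ⟶ M`, the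
factorization `II ⟶ M ⟶ FF` yields a diagonal `Z ⟶ Min`, which is in `E` because `E` is
left-cancellable.
-/

namespace FactorizationSystem

variable {K : Type u} [Category.{v} K] (FS : FactorizationSystem K)

theorem hom_ext {X Y X' Y' : K} {u : X ⟶ Y} {v : X' ⟶ Y'} (hu : FS.E u) (hv : FS.M v)
    {d d' : Y ⟶ X'} (h₁ : u ≫ d = u ≫ d') (h₂ : d ≫ v = d' ≫ v) : d = d' := by
  obtain ⟨_, -, huniq⟩ := FS.diagonal u v (u ≫ d') (d' ≫ v) hu hv (by simp)
  exact (huniq d ⟨h₁, h₂⟩).trans (huniq d' ⟨rfl, rfl⟩).symm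

theorem E_of_comp {X Y Z : K} {f : X ⟶ Y} {g : Y ⟶ Z} (hf : FS.E f) (hfg : FS.E (f ≫ g)) :
    FS.E g := by
  -- the `M`-part of `g` is inverted by the diagonal of this square
  obtain ⟨d, ⟨hd₁, hd₂⟩, -⟩ := FS.diagonal (f ≫ g) (FS.m g) (f ≫ FS.e g) (𝟙 Z) hfg
    (FS.m_mem g) (by rw [Category.comp_id, Category.assoc, FS.fac])
  have hmd : FS.m g ≫ d = 𝟙 _ := FS.hom_ext (FS.E_comp _ _ hf (FS.e_mem g)) (FS.m_mem g)
    (by rw [Category.comp_id, Category.assoc, ← Category.assoc (FS.e g), FS.fac,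
      ← Category.assoc, hd₁])
    (by rw [Category.assoc, hd₂, Category.comp_id, Category.id_comp])
  rw [← FS.fac g]
  exact FS.E_comp _ _ (FS.e_mem g) (FS.E_iso _ ⟨d, hmd, hd₂⟩)

section midMap

variable {X Y X' Y' : K} {f : X ⟶ Y} {f' : X' ⟶ Y'}

theorem exists_midMap (u : X ⟶ X') (v : Y ⟶ Y') (h : f ≫ v = u ≫ f') :
    ∃ d : FS.mid f ⟶ FS.mid f', FS.e f ≫ d = u ≫ FS.e f' ∧ d ≫ FS.m f' = FS.m f ≫ v :=
  (FS.diagonal (FS.e f) (FS.m f') (u ≫ FS.e f') (FS.m f ≫ v) (FS.e_mem f) (FS.m_mem f')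
    (by rw [← Category.assoc, FS.fac, h, Category.assoc, FS.fac])).exists

noncomputable def midMap (u : X ⟶ X') (v : Y ⟶ Y') (h : f ≫ v = u ≫ f') :
    FS.mid f ⟶ FS.mid f' :=
  (FS.exists_midMap u v h).choose

theorem e_midMap (u : X ⟶ X') (v : Y ⟶ Y') (h : f ≫ v = u ≫ f') :
    FS.e f ≫ FS.midMap u v h = u ≫ FS.e f' :=
  (FS.exists_midMap u v h).choose_spec.1

theorem midMap_m (u : X ⟶ X') (v : Y ⟶ Y') (h : f ≫ v = u ≫ f') :
    FS.midMap u v h ≫ FS.m f' = FS.m f ≫ v :=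
  (FS.exists_midMap u v h).choose_spec.2

theorem midMap_comp_midMap {X'' Y'' : K} {f'' : X'' ⟶ Y''} (u : X ⟶ X') (v : Y ⟶ Y')
    (h : f ≫ v = u ≫ f') (u' : X' ⟶ X'') (v' : Y' ⟶ Y'') (h' : f' ≫ v' = u' ≫ f'') :
    FS.midMap u v h ≫ FS.midMap u' v' h' =
      FS.midMap (u ≫ u') (v ≫ v') (by rw [← Category.assoc, h, Category.assoc, h',
        Category.assoc]) :=
  FS.hom_ext (FS.e_mem f) (FS.m_mem f'')
    (by rw [← Category.assoc, e_midMap, Category.assoc, e_midMap, e_midMap, Category.assoc])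
    (by rw [Category.assoc, midMap_m, ← Category.assoc, midMap_m, midMap_m, Category.assoc])

end midMap

end FactorizationSystem

variable {A : Type} {C : Type u} [Category.{v} C]

def wordAct {Q : C} (δ : A → (Q ⟶ Q)) : List A → (Q ⟶ Q)
  | [] => 𝟙 Q
  | a :: w => δ a ≫ wordAct δ w

section wordAct

variable {Q R : C} (δ : A → (Q ⟶ Q))

@[simp]
theorem wordAct_nil : wordAct δ [] = 𝟙 Q := rfl

@[simp]
theorem wordAct_cons (a : A) (w : List A) : wordAct δ (a :: w) = δ a ≫ wordAct δ w := rfl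

theorem wordAct_append (u w : List A) : wordAct δ (u ++ w) = wordAct δ u ≫ wordAct δ w := by
  induction u with
  | nil => simp
  | cons a u ih => simp [ih]

theorem wordAct_comm {δ' : A → (R ⟶ R)} (φ : Q ⟶ R) (h : ∀ a, δ a ≫ φ = φ ≫ δ' a)
    (w : List A) : wordAct δ w ≫ φ = φ ≫ wordAct δ' w := by
  induction w with
  | nil => simp
  | cons a w ih => rw [wordAct_cons, wordAct_cons, Category.assoc, ih, ← Category.assoc, h,
      Category.assoc]

end wordAct

theorem pathCC_concat (w : List A) (a : A) : pathCC (w ++ [a]) = pathCC w ≫ IA.letter a := by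
  induction w with
  | nil => exact (Quiver.Path.comp_nil _).trans (Category.id_comp (IA.letter a)).symm
  | cons b w ih => exact (congrArg (IA.letter b ≫ ·) ih).trans (Category.assoc _ _ _).symm

namespace IA

theorem exists_eq_pathLR (p : IA.l A ⟶ IA.r A) : ∃ w, p = pathLR w := by
  let P : ∀ {Z : IA A}, (IA.l A ⟶ Z) → Prop := fun {Z} p => match Z with
    | .left => True
    | .center => ∃ w, p = IA.tri A ≫ pathCC w
    | .right => ∃ w, p = pathLR w
  refine Paths.induction_fixed_source (a := IA.l A) P trivial ?_ p
  rintro (_ | _ | _) _ p (_ | a | _) hp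
  · obtain rfl := path_ll_nil p
    exact ⟨[], rfl⟩
  · obtain ⟨w, rfl⟩ := hp
    exact ⟨w ++ [a], by rw [pathCC_concat, ← Category.assoc]; rfl⟩
  · obtain ⟨w, rfl⟩ := hp
    exact ⟨w, Category.assoc _ _ _⟩

theorem map_pathCC (F : IA A ⥤ C) (w : List A) :
    F.map (pathCC w) = wordAct (fun a => F.map (IA.letter a)) w := by
  induction w with
  | nil => exact F.map_id (IA.c A)
  | cons a w ih => exact (F.map_comp (IA.letter a) (pathCC w)).trans (by rw [ih]; rfl)

theorem map_pathLR (F : IA A ⥤ C) (w : List A) : F.map (pathLR w) =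
    F.map (IA.tri A) ≫ wordAct (fun a => F.map (IA.letter a)) w ≫ F.map (IA.tril A) := by
  rw [pathLR, F.map_comp, F.map_comp, map_pathCC]

section lift

variable {X₀ Q X₁ : C} (i : X₀ ⟶ Q) (δ : A → (Q ⟶ Q)) (f : Q ⟶ X₁)

def liftPrefunctor : WObj A ⥤q C where
  obj
    | .left => X₀
    | .center => Q
    | .right => X₁
  map
    | .tri => i
    | .letter a => δ a
    | .tril => f

def lift : IA A ⥤ C := Paths.lift (liftPrefunctor i δ f)

@[simp]
theorem lift_obj_l : (lift i δ f).obj (IA.l A) = X₀ := rfl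

@[simp]
theorem lift_obj_c : (lift i δ f).obj (IA.c A) = Q := rfl

@[simp]
theorem lift_obj_r : (lift i δ f).obj (IA.r A) = X₁ := rfl

@[simp]
theorem lift_map_tri : (lift i δ f).map (IA.tri A) = i :=
  Paths.lift_toPath (liftPrefunctor i δ f) WEdge.tri

@[simp]
theorem lift_map_letter (a : A) : (lift i δ f).map (IA.letter a) = δ a :=
  Paths.lift_toPath (liftPrefunctor i δ f) (WEdge.letter a)

@[simp]
theorem lift_map_tril : (lift i δ f).map (IA.tril A) = f :=
  Paths.lift_toPath (liftPrefunctor i δ f) WEdge.tril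

end lift

def natTransMk {F G : IA A ⥤ C} (αl : F.obj (IA.l A) ⟶ G.obj (IA.l A))
    (αc : F.obj (IA.c A) ⟶ G.obj (IA.c A)) (αr : F.obj (IA.r A) ⟶ G.obj (IA.r A))
    (h_tri : F.map (IA.tri A) ≫ αc = αl ≫ G.map (IA.tri A))
    (h_letter : ∀ a, F.map (IA.letter a) ≫ αc = αc ≫ G.map (IA.letter a))
    (h_tril : F.map (IA.tril A) ≫ αr = αc ≫ G.map (IA.tril A)) : F ⟶ G :=
  Paths.liftNatTrans (V := WObj A) (F := F) (G := G)
    (fun | .left => αl | .center => αc | .right => αr)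
    (fun | .tri => h_tri | .letter a => h_letter a | .tril => h_tril)

theorem natTrans_ext {F G : IA A ⥤ C} {α β : F ⟶ G} (hl : α.app (IA.l A) = β.app (IA.l A))
    (hc : α.app (IA.c A) = β.app (IA.c A)) (hr : α.app (IA.r A) = β.app (IA.r A)) : α = β := by
  ext (_ | _ | _)
  exacts [hl, hc, hr]

end IA

namespace OA

theorem eq_l_or_eq_r (X : OA A) : X = OA.l A ∨ X = OA.r A := by
  obtain ⟨_ | _ | _, hX⟩ := X
  exacts [Or.inl rfl, absurd rfl hX, Or.inr rfl]

theorem functor_ext {F G : OA A ⥤ C} (hl : F.obj (OA.l A) = G.obj (OA.l A))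
    (hr : F.obj (OA.r A) = G.obj (OA.r A))
    (hw : ∀ w, F.map (OA.word w) = eqToHom hl ≫ G.map (OA.word w) ≫ eqToHom hr.symm) :
    F = G := by
  have hobj : ∀ X, F.obj X = G.obj X := fun X => by
    rcases eq_l_or_eq_r X with rfl | rfl
    exacts [hl, hr]
  refine CategoryTheory.Functor.ext hobj fun X Y p => ?_
  rcases eq_l_or_eq_r X with rfl | rfl <;> rcases eq_l_or_eq_r Y with rfl | rfl
  · obtain rfl : p = 𝟙 _ := InducedCategory.hom_ext (path_ll_nil p.hom)
    simp
  · obtain ⟨w, hw'⟩ := IA.exists_eq_pathLR p.hom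
    rw [(InducedCategory.hom_ext hw' : p = OA.word w)]
    exact hw w
  · exact (path_rl_false p.hom).elim
  · obtain rfl : p = 𝟙 _ := InducedCategory.hom_ext (path_rr_nil p.hom)
    simp

end OA

namespace Auto

def mk (L : OA A ⥤ C) (Q : C) (i : L.obj (OA.l A) ⟶ Q) (δ : A → (Q ⟶ Q))
    (f : Q ⟶ L.obj (OA.r A)) (h : ∀ w, i ≫ wordAct δ w ≫ f = L.map (OA.word w)) :
    Auto A L :=
  ⟨IA.lift i δ f, OA.functor_ext rfl rfl fun w => by
    change (IA.lift i δ f).map (pathLR w) = 𝟙 _ ≫ L.map (OA.word w) ≫ 𝟙 _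
    simp only [IA.map_pathLR, IA.lift_map_tri, IA.lift_map_letter, IA.lift_map_tril,
      Category.id_comp, Category.comp_id]
    exact h w⟩

variable {L : OA A ⥤ C}

/-- `M.1` is typed only up to unfolding `Auto`, which `rw` and `simp` do not see through. -/
def functor (M : Auto A L) : IA A ⥤ C := M.1

abbrev states (M : Auto A L) : C := M.functor.obj (IA.c A)

theorem inc_comp_functor (M : Auto A L) : OA.inc A ⋙ M.functor = L := M.2

theorem functor_obj_l (M : Auto A L) : M.functor.obj (IA.l A) = L.obj (OA.l A) :=
  Functor.congr_obj M.inc_comp_functor (OA.l A)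

theorem functor_obj_r (M : Auto A L) : M.functor.obj (IA.r A) = L.obj (OA.r A) :=
  Functor.congr_obj M.inc_comp_functor (OA.r A)

def init (M : Auto A L) : L.obj (OA.l A) ⟶ M.states :=
  eqToHom M.functor_obj_l.symm ≫ M.functor.map (IA.tri A)

def step (M : Auto A L) (a : A) : M.states ⟶ M.states := M.functor.map (IA.letter a)

def final (M : Auto A L) : M.states ⟶ L.obj (OA.r A) :=
  M.functor.map (IA.tril A) ≫ eqToHom M.functor_obj_r

theorem init_wordAct_final (M : Auto A L) (w : List A) :
    M.init ≫ wordAct M.step w ≫ M.final = L.map (OA.word w) := by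
  have h : M.functor.map (IA.tri A) ≫ wordAct M.step w ≫ M.functor.map (IA.tril A) =
      eqToHom M.functor_obj_l ≫ L.map (OA.word w) ≫ eqToHom M.functor_obj_r.symm :=
    (IA.map_pathLR M.functor w).symm.trans (Functor.congr_hom M.inc_comp_functor (OA.word w))
  simp [init, final, reassoc_of% h]

section mk

variable (Q : C) (i : L.obj (OA.l A) ⟶ Q) (δ : A → (Q ⟶ Q)) (f : Q ⟶ L.obj (OA.r A))
  (h : ∀ w, i ≫ wordAct δ w ≫ f = L.map (OA.word w))

@[simp]
theorem mk_functor : (mk L Q i δ f h).functor = IA.lift i δ f := rfl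

@[simp]
theorem mk_states : (mk L Q i δ f h).states = Q := rfl

@[simp]
theorem mk_init : (mk L Q i δ f h).init = i :=
  (Category.id_comp _).trans (IA.lift_map_tri i δ f)

@[simp]
theorem mk_step (a : A) : (mk L Q i δ f h).step a = δ a :=
  IA.lift_map_letter i δ f a

@[simp]
theorem mk_final : (mk L Q i δ f h).final = f :=
  (Category.comp_id _).trans (IA.lift_map_tril i δ f)

end mk

theorem functor_map_tri (M : Auto A L) :
    M.functor.map (IA.tri A) = eqToHom M.functor_obj_l ≫ M.init := by
  simp [init]

theorem functor_map_tril (M : Auto A L) :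
    M.functor.map (IA.tril A) = M.final ≫ eqToHom M.functor_obj_r.symm := by
  simp [final]

section Hom

variable {M N : Auto A L}

def center (τ : M ⟶ N) : M.states ⟶ N.states := (Auto.nat τ).app (IA.c A)

theorem nat_app_l (τ : M ⟶ N) :
    (Auto.nat τ).app (IA.l A) = eqToHom (M.functor_obj_l.trans N.functor_obj_l.symm) := by
  have h := NatTrans.congr_app τ.2 (OA.l A)
  rw [eqToHom_app] at h
  exact h

theorem nat_app_r (τ : M ⟶ N) :
    (Auto.nat τ).app (IA.r A) = eqToHom (M.functor_obj_r.trans N.functor_obj_r.symm) := by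
  have h := NatTrans.congr_app τ.2 (OA.r A)
  rw [eqToHom_app] at h
  exact h

theorem init_comp_center (τ : M ⟶ N) : M.init ≫ center τ = N.init := by
  have h : M.functor.map (IA.tri A) ≫ center τ = _ ≫ N.functor.map (IA.tri A) :=
    (Auto.nat τ).naturality (IA.tri A)
  rw [nat_app_l] at h
  rw [init, init, Category.assoc, h]
  simp

theorem step_comp_center (τ : M ⟶ N) (a : A) : M.step a ≫ center τ = center τ ≫ N.step a :=
  (Auto.nat τ).naturality (IA.letter a)

theorem center_comp_final (τ : M ⟶ N) : center τ ≫ N.final = M.final := by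
  have h : M.functor.map (IA.tril A) ≫ _ = center τ ≫ N.functor.map (IA.tril A) :=
    (Auto.nat τ).naturality (IA.tril A)
  rw [nat_app_r] at h
  rw [final, final, ← Category.assoc, ← h]
  simp

@[simp]
theorem center_comp {P : Auto A L} (τ : M ⟶ N) (σ : N ⟶ P) :
    center (τ ≫ σ) = center τ ≫ center σ := rfl

@[ext]
theorem hom_ext {τ σ : M ⟶ N} (h : center τ = center σ) : τ = σ :=
  Subtype.ext (IA.natTrans_ext ((nat_app_l τ).trans (nat_app_l σ).symm) h
    ((nat_app_r τ).trans (nat_app_r σ).symm))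

def homMk (φ : M.states ⟶ N.states) (h_init : M.init ≫ φ = N.init)
    (h_step : ∀ a, M.step a ≫ φ = φ ≫ N.step a) (h_final : φ ≫ N.final = M.final) : M ⟶ N :=
  ⟨IA.natTransMk (F := M.functor) (G := N.functor)
      (eqToHom (M.functor_obj_l.trans N.functor_obj_l.symm)) φ
      (eqToHom (M.functor_obj_r.trans N.functor_obj_r.symm))
      (by rw [functor_map_tri M, functor_map_tri N, Category.assoc, h_init]; simp) h_step
      (by rw [functor_map_tril M, functor_map_tril N, ← Category.assoc φ, h_final]; simp),
    NatTrans.ext <| funext fun X => by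
      rcases OA.eq_l_or_eq_r X with rfl | rfl <;> rw [eqToHom_app] <;> rfl⟩

theorem nat_app_mem_of_center_mem {P : MorphismProperty C}
    (hP : ∀ {X Y : C} (f : X ⟶ Y), IsIso f → P f) (τ : M ⟶ N) (h : P (center τ)) (X : IA A) :
    P ((Auto.nat τ).app X) := by
  rcases X with _ | _ | _
  · exact (nat_app_l τ).symm ▸ hP (eqToHom (M.functor_obj_l.trans N.functor_obj_l.symm))
      inferInstance
  · exact h
  · exact (nat_app_r τ).symm ▸ hP (eqToHom (M.functor_obj_r.trans N.functor_obj_r.symm))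
      inferInstance

end Hom

end Auto

section FreeAction

-- words are lifted to `Type v` so that `HasColimits C` (of size `v`) provides the coproduct
variable (A) [HasCoproductsOfShape (ULift.{v} (List A)) C] (X : C)

noncomputable abbrev freeStates : C := ∐ fun _ : ULift.{v} (List A) => X

variable {A X}

noncomputable def freeι (w : List A) : X ⟶ freeStates A X :=
  Sigma.ι (fun _ : ULift.{v} (List A) => X) ⟨w⟩

noncomputable def freeStep (a : A) : freeStates A X ⟶ freeStates A X :=
  Sigma.desc fun w => freeι (w.down ++ [a])

theorem freeι_freeStep (u : List A) (a : A) :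
    freeι u ≫ freeStep a = freeι (X := X) (u ++ [a]) :=
  Sigma.ι_desc _ _

theorem freeι_wordAct (u w : List A) :
    freeι u ≫ wordAct (freeStep (X := X)) w = freeι (u ++ w) := by
  induction w generalizing u with
  | nil => simp
  | cons a w ih => rw [wordAct_cons, ← Category.assoc, freeι_freeStep, ih]; simp

theorem freeStates_hom_ext {Q : C} {φ ψ : freeStates A X ⟶ Q}
    (h : ∀ w, freeι w ≫ φ = freeι w ≫ ψ) : φ = ψ :=
  Sigma.hom_ext _ _ fun w => h w.down

noncomputable def freeDesc {Q : C} (g : List A → (X ⟶ Q)) : freeStates A X ⟶ Q :=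
  Sigma.desc fun w => g w.down

@[simp]
theorem freeι_freeDesc {Q : C} (g : List A → (X ⟶ Q)) (w : List A) :
    freeι w ≫ freeDesc g = g w :=
  Sigma.ι_desc _ _

noncomputable def freeFold {Q : C} (i : X ⟶ Q) (δ : A → (Q ⟶ Q)) : freeStates A X ⟶ Q :=
  freeDesc fun w => i ≫ wordAct δ w

variable {Q : C} (i : X ⟶ Q) (δ : A → (Q ⟶ Q))

@[simp]
theorem freeι_freeFold (w : List A) : freeι w ≫ freeFold i δ = i ≫ wordAct δ w :=
  freeι_freeDesc _ w

theorem freeStep_freeFold (a : A) : freeStep a ≫ freeFold i δ = freeFold i δ ≫ δ a :=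
  freeStates_hom_ext fun w => by
    rw [← Category.assoc, freeι_freeStep, freeι_freeFold, ← Category.assoc, freeι_freeFold,
      wordAct_append]
    simp

theorem eq_freeFold (φ : freeStates A X ⟶ Q) (h_init : freeι [] ≫ φ = i)
    (h_step : ∀ a, freeStep a ≫ φ = φ ≫ δ a) : φ = freeFold i δ :=
  freeStates_hom_ext fun w => by
    rw [freeι_freeFold, ← h_init, Category.assoc, ← wordAct_comm _ φ h_step, ← Category.assoc,
      freeι_wordAct, List.nil_append]

end FreeAction

section CofreeAction

variable (A) [HasProductsOfShape (ULift.{v} (List A)) C] (Y : C)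

noncomputable abbrev cofreeStates : C := ∏ᶜ fun _ : ULift.{v} (List A) => Y

variable {A Y}

noncomputable def cofreeπ (w : List A) : cofreeStates A Y ⟶ Y :=
  Pi.π (fun _ : ULift.{v} (List A) => Y) ⟨w⟩

noncomputable def cofreeStep (a : A) : cofreeStates A Y ⟶ cofreeStates A Y :=
  Pi.lift fun w => cofreeπ (a :: w.down)

theorem cofreeStep_cofreeπ (a : A) (u : List A) :
    cofreeStep a ≫ cofreeπ u = cofreeπ (Y := Y) (a :: u) :=
  Pi.lift_π _ _

theorem wordAct_cofreeπ (w u : List A) :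
    wordAct (cofreeStep (Y := Y)) w ≫ cofreeπ u = cofreeπ (w ++ u) := by
  induction w generalizing u with
  | nil => simp
  | cons a w ih => rw [wordAct_cons, Category.assoc, ih, cofreeStep_cofreeπ]; rfl

theorem cofreeStates_hom_ext {Q : C} {φ ψ : Q ⟶ cofreeStates A Y}
    (h : ∀ w, φ ≫ cofreeπ w = ψ ≫ cofreeπ w) : φ = ψ :=
  Pi.hom_ext _ _ fun w => h w.down

noncomputable def cofreeLift {Q : C} (g : List A → (Q ⟶ Y)) : Q ⟶ cofreeStates A Y :=
  Pi.lift fun w => g w.down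

@[simp]
theorem cofreeLift_cofreeπ {Q : C} (g : List A → (Q ⟶ Y)) (w : List A) :
    cofreeLift g ≫ cofreeπ w = g w :=
  Pi.lift_π _ _

noncomputable def cofreeUnfold {Q : C} (δ : A → (Q ⟶ Q)) (f : Q ⟶ Y) : Q ⟶ cofreeStates A Y :=
  cofreeLift fun w => wordAct δ w ≫ f

variable {Q : C} (δ : A → (Q ⟶ Q)) (f : Q ⟶ Y)

@[simp]
theorem cofreeUnfold_cofreeπ (w : List A) : cofreeUnfold δ f ≫ cofreeπ w = wordAct δ w ≫ f :=
  cofreeLift_cofreeπ _ w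

theorem cofreeUnfold_cofreeStep (a : A) :
    δ a ≫ cofreeUnfold δ f = cofreeUnfold δ f ≫ cofreeStep a :=
  cofreeStates_hom_ext fun w => by
    rw [Category.assoc, Category.assoc, cofreeStep_cofreeπ, cofreeUnfold_cofreeπ,
      cofreeUnfold_cofreeπ, wordAct_cons, Category.assoc]

theorem eq_cofreeUnfold (φ : Q ⟶ cofreeStates A Y) (h_final : φ ≫ cofreeπ [] = f)
    (h_step : ∀ a, δ a ≫ φ = φ ≫ cofreeStep a) : φ = cofreeUnfold δ f :=
  cofreeStates_hom_ext fun w => by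
    rw [cofreeUnfold_cofreeπ, ← h_final, ← Category.assoc, wordAct_comm _ φ h_step,
      Category.assoc, wordAct_cofreeπ, List.append_nil]

end CofreeAction

namespace Auto

section Initial

variable (L : OA A ⥤ C) [HasCoproductsOfShape (ULift.{v} (List A)) C]

noncomputable def initial : Auto A L :=
  mk L (freeStates A (L.obj (OA.l A))) (freeι []) freeStep (freeDesc fun w => L.map (OA.word w))
    fun w => by rw [← Category.assoc, freeι_wordAct, freeι_freeDesc, List.nil_append]

variable {L}

noncomputable def fromInitial (M : Auto A L) : initial L ⟶ M :=
  homMk (freeFold M.init M.step) (by simp [initial]) (by simp [initial, freeStep_freeFold])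
    (freeStates_hom_ext fun w => by
      dsimp only [initial, mk_states]
      rw [← Category.assoc, freeι_freeFold, Category.assoc, init_wordAct_final]
      simp)

variable (L)

noncomputable def initialIsInitial : IsInitial (initial L) :=
  IsInitial.ofUniqueHom fromInitial fun M τ => hom_ext <|
    eq_freeFold _ _ (center τ) (by simpa [initial] using init_comp_center τ)
      (by simpa [initial] using step_comp_center τ)

variable {L} in
noncomputable def initialLift (F : IA A ⥤ C) (αl : L.obj (OA.l A) ⟶ F.obj (IA.l A))
    (αr : L.obj (OA.r A) ⟶ F.obj (IA.r A))
    (hα : ∀ w, L.map (OA.word w) ≫ αr = αl ≫ F.map (pathLR w)) : (initial L).functor ⟶ F :=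
  IA.natTransMk αl (freeFold (αl ≫ F.map (IA.tri A)) fun a => F.map (IA.letter a)) αr
    (by simp [initial]) (fun a => by simp [initial, freeStep_freeFold])
    (freeStates_hom_ext fun w => by
      dsimp only [initial, mk_functor, IA.lift_obj_c, IA.lift_obj_r]
      rw [IA.lift_map_tril, ← Category.assoc, freeι_freeDesc, hα, ← Category.assoc,
        freeι_freeFold, IA.map_pathLR]
      simp)

variable {L} in
theorem initial_unit_comp_app_l {F : IA A ⥤ C} (γ : (initial L).functor ⟶ F) :
    (eqToHom (initial L).inc_comp_functor.symm ≫ (OA.inc A).whiskerLeft γ).app (OA.l A) =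
      γ.app (IA.l A) := by
  rw [NatTrans.comp_app, eqToHom_app, Functor.whiskerLeft_app]
  exact Category.id_comp _

variable {L} in
theorem initial_unit_comp_app_r {F : IA A ⥤ C} (γ : (initial L).functor ⟶ F) :
    (eqToHom (initial L).inc_comp_functor.symm ≫ (OA.inc A).whiskerLeft γ).app (OA.r A) =
      γ.app (IA.r A) := by
  rw [NatTrans.comp_app, eqToHom_app, Functor.whiskerLeft_app]
  exact Category.id_comp _

theorem initial_isLeftKanExtension :
    (initial L).functor.IsLeftKanExtension (eqToHom (initial L).inc_comp_functor.symm) := by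
  refine ⟨⟨IsInitial.ofUniqueHom (fun G => StructuredArrow.homMk (initialLift G.right
    (G.hom.app (OA.l A)) (G.hom.app (OA.r A)) fun w => G.hom.naturality (OA.word w)) ?_) ?_⟩⟩
  · refine NatTrans.ext <| funext fun X => ?_
    rcases OA.eq_l_or_eq_r X with rfl | rfl
    exacts [initial_unit_comp_app_l _, initial_unit_comp_app_r _]
  · intro G τ
    have hl := (initial_unit_comp_app_l τ.right).symm.trans
      (NatTrans.congr_app (StructuredArrow.w τ) (OA.l A))
    have hr := (initial_unit_comp_app_r τ.right).symm.trans
      (NatTrans.congr_app (StructuredArrow.w τ) (OA.r A))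
    refine StructuredArrow.hom_ext _ _ (IA.natTrans_ext hl (eq_freeFold _ _ _ ?_ ?_) hr)
    · have h : (initial L).functor.map (IA.tri A) ≫ τ.right.app (IA.c A) =
          τ.right.app (IA.l A) ≫ G.right.map (IA.tri A) := τ.right.naturality (IA.tri A)
      simp only [initial, mk_functor, IA.lift_map_tri, hl] at h
      exact h
    · intro a
      have h : (initial L).functor.map (IA.letter a) ≫ τ.right.app (IA.c A) =
          τ.right.app (IA.c A) ≫ G.right.map (IA.letter a) := τ.right.naturality (IA.letter a)
      simp only [initial, mk_functor, IA.lift_map_letter] at h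
      exact h

end Initial

section Terminal

variable (L : OA A ⥤ C) [HasProductsOfShape (ULift.{v} (List A)) C]

noncomputable def terminal : Auto A L :=
  mk L (cofreeStates A (L.obj (OA.r A))) (cofreeLift fun w => L.map (OA.word w)) cofreeStep
    (cofreeπ []) fun w => by rw [wordAct_cofreeπ, List.append_nil, cofreeLift_cofreeπ]

variable {L}

noncomputable def toTerminal (M : Auto A L) : M ⟶ terminal L :=
  homMk (cofreeUnfold M.step M.final)
    (cofreeStates_hom_ext fun w => by
      dsimp only [terminal, mk_states]
      rw [Category.assoc, cofreeUnfold_cofreeπ, init_wordAct_final]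
      simp)
    (fun a => by simp [terminal, cofreeUnfold_cofreeStep])
    (by simp [terminal])

variable (L)

noncomputable def terminalIsTerminal : IsTerminal (terminal L) :=
  IsTerminal.ofUniqueHom toTerminal fun M τ => hom_ext <|
    eq_cofreeUnfold _ _ (center τ) (by simpa [terminal] using center_comp_final τ)
      (by simpa [terminal] using step_comp_center τ)

variable {L} in
noncomputable def terminalLift (F : IA A ⥤ C) (αl : F.obj (IA.l A) ⟶ L.obj (OA.l A))
    (αr : F.obj (IA.r A) ⟶ L.obj (OA.r A))
    (hα : ∀ w, F.map (pathLR w) ≫ αr = αl ≫ L.map (OA.word w)) : F ⟶ (terminal L).functor :=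
  IA.natTransMk αl (cofreeUnfold (fun a => F.map (IA.letter a)) (F.map (IA.tril A) ≫ αr)) αr
    (cofreeStates_hom_ext fun w => by
      dsimp only [terminal, mk_functor, IA.lift_obj_l, IA.lift_obj_c]
      rw [IA.lift_map_tri, Category.assoc, cofreeUnfold_cofreeπ, Category.assoc,
        cofreeLift_cofreeπ, ← hα, IA.map_pathLR]
      simp)
    (fun a => by
      simp only [terminal, mk_functor, IA.lift_map_letter]
      exact cofreeUnfold_cofreeStep (fun a => F.map (IA.letter a)) (F.map (IA.tril A) ≫ αr) a)
    (by simp [terminal])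

variable {L} in
theorem terminal_comp_counit_app_l {F : IA A ⥤ C} (γ : F ⟶ (terminal L).functor) :
    ((OA.inc A).whiskerLeft γ ≫ eqToHom (terminal L).inc_comp_functor).app (OA.l A) =
      γ.app (IA.l A) := by
  rw [NatTrans.comp_app, eqToHom_app, Functor.whiskerLeft_app]
  exact Category.comp_id _

variable {L} in
theorem terminal_comp_counit_app_r {F : IA A ⥤ C} (γ : F ⟶ (terminal L).functor) :
    ((OA.inc A).whiskerLeft γ ≫ eqToHom (terminal L).inc_comp_functor).app (OA.r A) =
      γ.app (IA.r A) := by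
  rw [NatTrans.comp_app, eqToHom_app, Functor.whiskerLeft_app]
  exact Category.comp_id _

theorem terminal_isRightKanExtension :
    (terminal L).functor.IsRightKanExtension (eqToHom (terminal L).inc_comp_functor) := by
  refine ⟨⟨IsTerminal.ofUniqueHom (fun G => CostructuredArrow.homMk (terminalLift G.left
    (G.hom.app (OA.l A)) (G.hom.app (OA.r A)) fun w => G.hom.naturality (OA.word w)) ?_) ?_⟩⟩
  · refine NatTrans.ext <| funext fun X => ?_
    rcases OA.eq_l_or_eq_r X with rfl | rfl
    exacts [terminal_comp_counit_app_l _, terminal_comp_counit_app_r _]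
  · intro G τ
    have hl := (terminal_comp_counit_app_l τ.left).symm.trans
      (NatTrans.congr_app (CostructuredArrow.w τ) (OA.l A))
    have hr := (terminal_comp_counit_app_r τ.left).symm.trans
      (NatTrans.congr_app (CostructuredArrow.w τ) (OA.r A))
    refine CostructuredArrow.hom_ext _ _ (IA.natTrans_ext hl (eq_cofreeUnfold _ _ _ ?_ ?_) hr)
    · have h : G.left.map (IA.tril A) ≫ τ.left.app (IA.r A) =
          τ.left.app (IA.c A) ≫ (terminal L).functor.map (IA.tril A) :=
        τ.left.naturality (IA.tril A)
      simp only [terminal, mk_functor, IA.lift_map_tril, hr] at h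
      exact h.symm
    · intro a
      have h : G.left.map (IA.letter a) ≫ τ.left.app (IA.c A) =
          τ.left.app (IA.c A) ≫ (terminal L).functor.map (IA.letter a) :=
        τ.left.naturality (IA.letter a)
      simp only [terminal, mk_functor, IA.lift_map_letter] at h
      exact h

end Terminal

variable {L : OA A ⥤ C} (FS : FactorizationSystem C)

section Image

variable {M N : Auto A L} (τ : M ⟶ N)

noncomputable def image : Auto A L :=
  mk L (FS.mid (center τ)) (M.init ≫ FS.e _)
    (fun a => FS.midMap (M.step a) (N.step a) (step_comp_center τ a).symm) (FS.m _ ≫ N.final)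
    fun w => by
      have he := wordAct_comm M.step (FS.e (center τ))
        (fun a => (FS.e_midMap _ (N.step a) (step_comp_center τ a).symm).symm) w
      simp only [Category.assoc]
      rw [← reassoc_of% he, ← Category.assoc (FS.e _), FS.fac, center_comp_final,
        init_wordAct_final]

noncomputable def toImage : M ⟶ image FS τ :=
  homMk (FS.e _) (by simp [image]) (fun a => by simp [image, FS.e_midMap])
    (by simp [image, ← Category.assoc, FS.fac, center_comp_final])

noncomputable def fromImage : image FS τ ⟶ N :=
  homMk (FS.m _) (by simp [image, FS.fac, init_comp_center])
    (fun a => by simp [image, FS.midMap_m]) (by simp [image])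

theorem toImage_app_mem (X : IA A) : FS.E ((Auto.nat (toImage FS τ)).app X) :=
  nat_app_mem_of_center_mem FS.E_iso (toImage FS τ) (FS.e_mem _) X

theorem fromImage_app_mem (X : IA A) : FS.M ((Auto.nat (fromImage FS τ)).app X) :=
  nat_app_mem_of_center_mem FS.M_iso (fromImage FS τ) (FS.m_mem _) X

variable {P : Auto A L} {σ : M ⟶ P} (ρ : N ⟶ P) (h : τ ≫ ρ = σ)

noncomputable def imageMap : image FS τ ⟶ image FS σ :=
  homMk (FS.midMap (𝟙 _) (center ρ) (by rw [← h, center_comp, Category.id_comp]))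
    (by simp [image, FS.e_midMap])
    (fun a => by
      dsimp only [image, mk_states]
      simp only [mk_step, FS.midMap_comp_midMap, Category.comp_id, Category.id_comp,
        step_comp_center])
    (by
      dsimp only [image, mk_states]
      rw [mk_final, mk_final, ← Category.assoc, FS.midMap_m, Category.assoc, center_comp_final])

theorem e_comp_center_imageMap :
    FS.e (center τ) ≫ center (imageMap FS τ ρ h) = FS.e (center σ) :=
  (FS.e_midMap _ _ (by rw [← h, center_comp, Category.id_comp])).trans (Category.id_comp _)

theorem imageMap_app_mem (X : IA A) : FS.E ((Auto.nat (imageMap FS τ ρ h)).app X) :=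
  nat_app_mem_of_center_mem FS.E_iso _ (FS.E_of_comp (FS.e_mem (center τ))
    ((e_comp_center_imageMap FS τ ρ h).symm ▸ FS.e_mem (center σ))) X

end Image

end Auto

/-- If `C` is complete and cocomplete and carries a factorization system `(E, M)`, then for
every language `L : O_A ⥤ C` the category `Auto(L)` has an initial object (a left Kan
extension of `L` along `ι`) and a final object (a right Kan extension of `L` along `ι`),
and the componentwise factorization of the unique morphism from the initial to the final
object yields an automaton `Min` accepting `L` which `(E_Aut, M_Aut)`-divides every
automaton accepting `L`. -/
theorem minimal_automaton_exists {A : Type} {C : Type u} [Category.{v} C]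
    [HasLimits C] [HasColimits C] (FS : FactorizationSystem C) (L : OA A ⥤ C) :
    ∃ (II FF Min : Auto A L),
      Nonempty (IsInitial II) ∧ Nonempty (IsTerminal FF) ∧
      (∃ η : L ⟶ OA.inc A ⋙ II.1, II.1.IsLeftKanExtension η) ∧
      (∃ ε : OA.inc A ⋙ FF.1 ⟶ L, FF.1.IsRightKanExtension ε) ∧
      (∃ (e : II ⟶ Min) (m : Min ⟶ FF),
        (∀ X : IA A, FS.E ((Auto.nat e).app X)) ∧ (∀ X : IA A, FS.M ((Auto.nat m).app X))) ∧
      ∀ M : Auto A L, ∃ (Z : Auto A L) (mm : Z ⟶ M) (ee : Z ⟶ Min),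
        (∀ X : IA A, FS.M ((Auto.nat mm).app X)) ∧
        (∀ X : IA A, FS.E ((Auto.nat ee).app X)) := by
  let hII := Auto.initialIsInitial L
  let hFF := Auto.terminalIsTerminal L
  let φ := hII.to (Auto.terminal L)
  refine ⟨Auto.initial L, Auto.terminal L, Auto.image FS φ, ⟨hII⟩, ⟨hFF⟩,
    ⟨_, Auto.initial_isLeftKanExtension L⟩, ⟨_, Auto.terminal_isRightKanExtension L⟩,
    ⟨Auto.toImage FS φ, Auto.fromImage FS φ, Auto.toImage_app_mem FS φ,
      Auto.fromImage_app_mem FS φ⟩, fun M => ?_⟩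
  have hφ : hII.to M ≫ hFF.from M = φ := hII.hom_ext _ _
  exact ⟨Auto.image FS (hII.to M), Auto.fromImage FS _, Auto.imageMap FS _ _ hφ,
    Auto.fromImage_app_mem FS _, Auto.imageMap_app_mem FS _ _ hφ⟩
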